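/- arXiv:1210.3932 — 3 statements merged into one kernel-verified Lean document; each statement's English description precedes it below -/
import Mathlib

section
/- For a càdlàg function f : [a,b] → ℝ and c > 0, and for every s ∈ (a,b], the truncated variation decomposes as the sum of the upward and downward truncated variations: TV^c(f,[a,s]) = UTV^c(f,[a,s]) + DTV^c(f,[a,s]). -/
open Set Filter

/-- A finite partition `t 0 < t 1 < ... < t n` of points in `[a, b]`. -/
def IsPart (a b : ℝ) (n : ℕ) (t : ℕ → ℝ) : Prop :=
  a ≤ t 0 ∧ t n ≤ b ∧ ∀ i < n, t i < t (i + 1)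

/-- Total variation of `f` on `[a, b]`. -/
noncomputable def TVar {E : Type*} [PseudoMetricSpace E] (f : ℝ → E) (a b : ℝ) : ENNReal :=
  ⨆ (n : ℕ) (t : ℕ → ℝ) (_ : IsPart a b n t),
    ∑ i ∈ Finset.range n, ENNReal.ofReal (dist (f (t (i + 1))) (f (t i)))

/-- Truncated variation of `f` at level `c` on `[a, b]`. -/
noncomputable def TVc {E : Type*} [PseudoMetricSpace E] (f : ℝ → E) (c a b : ℝ) : ENNReal :=
  ⨆ (n : ℕ) (t : ℕ → ℝ) (_ : IsPart a b n t),
    ∑ i ∈ Finset.range n, ENNReal.ofReal (dist (f (t (i + 1))) (f (t i)) - c)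

/-- Upward truncated variation. -/
noncomputable def UTVc (f : ℝ → ℝ) (c a b : ℝ) : ENNReal :=
  ⨆ (n : ℕ) (t : ℕ → ℝ) (_ : IsPart a b n t),
    ∑ i ∈ Finset.range n, ENNReal.ofReal (f (t (i + 1)) - f (t i) - c)

/-- Downward truncated variation. -/
noncomputable def DTVc (f : ℝ → ℝ) (c a b : ℝ) : ENNReal :=
  ⨆ (n : ℕ) (t : ℕ → ℝ) (_ : IsPart a b n t),
    ∑ i ∈ Finset.range n, ENNReal.ofReal (f (t i) - f (t (i + 1)) - c)

/-- `f` is càdlàg on `[a, b]`: right-continuous on `[a, b)`, with left limits on `(a, b]`. -/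
def Cadlag {E : Type*} [TopologicalSpace E] (f : ℝ → E) (a b : ℝ) : Prop :=
  (∀ t ∈ Set.Ico a b, Tendsto f (nhdsWithin t (Set.Ioi t)) (nhds (f t))) ∧
  (∀ t ∈ Set.Ioc a b, ∃ l, Tendsto f (nhdsWithin t (Set.Iio t)) (nhds l))

/-!
`TV^c ≤ UTV^c + DTV^c` holds term by term, since `(|d| - c)⁺ ≤ (d - c)⁺ + (-d - c)⁺`.

For the converse, a partition used for the rises and one used for the falls are merged, left to
right, into a single family of non-overlapping intervals whose `c`-truncated variation dominates
the sum of the two. Let `[i, j]` be the first rising interval and `[k, l]` the first falling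
one, with `i ≤ k`. If `j ≤ k`, `[i, j]` is emitted. If they straddle, both are moved to meet at
whichever of `j`, `k` has the larger value, which only increases both gains. If `[k, l]` is
nested in `[i, j]` and falls by at least `c`, then `[i, j]` is cut into `[i, k]`, `[k, l]`,
`[l, j]` without loss; otherwise `[k, l]` contributes nothing and is dropped. The case `k < i`
is the same argument applied to `-f`.
-/

open scoped ENNReal

noncomputable def riseGain (f : ℝ → ℝ) (c x y : ℝ) : ℝ≥0∞ := ENNReal.ofReal (f y - f x - c)

noncomputable def jumpGain (f : ℝ → ℝ) (c x y : ℝ) : ℝ≥0∞ := ENNReal.ofReal (dist (f y) (f x) - c)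

noncomputable def partSum (g : ℝ → ℝ → ℝ≥0∞) (n : ℕ) (t : ℕ → ℝ) : ℝ≥0∞ :=
  ∑ i ∈ Finset.range n, g (t i) (t (i + 1))

noncomputable def chainSum (g : ℝ → ℝ → ℝ≥0∞) (r : List (ℝ × ℝ)) : ℝ≥0∞ :=
  (r.map fun p => g p.1 p.2).sum

@[simp] lemma chainSum_nil (g : ℝ → ℝ → ℝ≥0∞) : chainSum g [] = 0 := rfl

@[simp] lemma chainSum_cons (g : ℝ → ℝ → ℝ≥0∞) (x y : ℝ) (r : List (ℝ × ℝ)) :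
    chainSum g ((x, y) :: r) = g x y + chainSum g r := rfl

lemma chainSum_mono {g h : ℝ → ℝ → ℝ≥0∞} (hgh : ∀ x y, g x y ≤ h x y) (r : List (ℝ × ℝ)) :
    chainSum g r ≤ chainSum h r :=
  List.sum_le_sum fun p _ => hgh p.1 p.2

section Gains

variable (f : ℝ → ℝ) (c : ℝ)

lemma dtvc_eq_utvc_neg (a b : ℝ) : DTVc f c a b = UTVc (-f) c a b := by
  simp only [DTVc, UTVc, Pi.neg_apply, neg_sub_neg]

lemma jumpGain_neg : jumpGain (-f) c = jumpGain f c := by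
  ext x y
  simp only [jumpGain, Pi.neg_apply, dist_neg_neg]

lemma riseGain_le_jumpGain (x y : ℝ) : riseGain f c x y ≤ jumpGain f c x y :=
  ENNReal.ofReal_le_ofReal <| by
    rw [Real.dist_eq]
    linarith [le_abs_self (f y - f x)]

lemma jumpGain_le_riseGain_add_riseGain_neg (x y : ℝ) :
    jumpGain f c x y ≤ riseGain f c x y + riseGain (-f) c x y := by
  simp only [jumpGain, riseGain, Real.dist_eq, Pi.neg_apply]
  rcases le_total 0 (f y - f x) with h | h
  · rw [abs_of_nonneg h]
    exact le_self_add
  · rw [abs_of_nonpos h]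
    exact (ENNReal.ofReal_le_ofReal (by linarith)).trans le_add_self

variable {f c}

lemma jumpGain_self (hc : 0 ≤ c) (x : ℝ) : jumpGain f c x x = 0 :=
  ENNReal.ofReal_eq_zero.2 <| by simpa using hc

lemma riseGain_le_riseGain {x y x' y' : ℝ} (hx : f x' ≤ f x) (hy : f y ≤ f y') :
    riseGain f c x y ≤ riseGain f c x' y' :=
  ENNReal.ofReal_le_ofReal <| by linarith

lemma riseGain_le_add_riseGain {i j k l : ℝ} (hkl : c ≤ f k - f l) :
    riseGain f c i j ≤ riseGain f c i k + riseGain f c l j :=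
  calc ENNReal.ofReal (f j - f i - c)
      ≤ ENNReal.ofReal ((f k - f i - c) + (f j - f l - c)) := ENNReal.ofReal_le_ofReal (by linarith)
    _ ≤ _ := ENNReal.ofReal_add_le

end Gains

/-- Intervals `[y, z]` inside `[x, s]`, listed left to right; they may be degenerate and need not
be adjacent. -/
inductive IntervalChain : ℝ → ℝ → List (ℝ × ℝ) → Prop
  | nil {x s : ℝ} : x ≤ s → IntervalChain x s []
  | cons {x y z s : ℝ} {r : List (ℝ × ℝ)} :
      x ≤ y → y ≤ z → IntervalChain z s r → IntervalChain x s ((y, z) :: r)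

namespace IntervalChain

lemma mono_left {x x' s : ℝ} {r : List (ℝ × ℝ)} (hx : x' ≤ x) :
    IntervalChain x s r → IntervalChain x' s r
  | nil hxs => nil (hx.trans hxs)
  | cons hxy hyz hr => cons (hx.trans hxy) hyz hr

end IntervalChain

def Mergeable (f : ℝ → ℝ) (c lb s : ℝ) (p q : List (ℝ × ℝ)) : Prop :=
  ∃ r, IntervalChain lb s r ∧
    chainSum (riseGain f c) p + chainSum (riseGain (-f) c) q ≤ chainSum (jumpGain f c) r

section Merge

variable {f : ℝ → ℝ} {c lb s : ℝ}

lemma Mergeable.of_neg {p q : List (ℝ × ℝ)} (h : Mergeable (-f) c lb s q p) :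
    Mergeable f c lb s p q := by
  obtain ⟨r, hr, hle⟩ := h
  rw [neg_neg, jumpGain_neg, add_comm] at hle
  exact ⟨r, hr, hle⟩

lemma mergeable_nil_left {q : List (ℝ × ℝ)} (hq : IntervalChain lb s q) :
    Mergeable f c lb s [] q :=
  ⟨q, hq, by simpa [← jumpGain_neg f] using chainSum_mono (riseGain_le_jumpGain (-f) c) q⟩

lemma mergeable_cons_cons {i j k l : ℝ} {p q : List (ℝ × ℝ)}
    (ih : ∀ lb p₀ q₀, p₀.length + q₀.length ≤ p.length + q.length + 1 →
      IntervalChain lb s p₀ → IntervalChain lb s q₀ → Mergeable f c lb s p₀ q₀)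
    (hik : i ≤ k) (hi : lb ≤ i) (hij : i ≤ j) (hp : IntervalChain j s p)
    (hk : lb ≤ k) (hkl : k ≤ l) (hq : IntervalChain l s q) :
    Mergeable f c lb s ((i, j) :: p) ((k, l) :: q) := by
  rcases le_total j k with hjk | hkj
  · obtain ⟨r, hr, hle⟩ := ih j p ((k, l) :: q) (by simp; omega) hp (.cons hjk hkl hq)
    refine ⟨(i, j) :: r, .cons hi hij hr, ?_⟩
    simp only [chainSum_cons, add_assoc] at hle ⊢
    exact add_le_add (riseGain_le_jumpGain f c i j) hle
  rcases le_total j l with hjl | hlj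
  · obtain ⟨m, hkm, hmj, hfj, hfk⟩ : ∃ m, k ≤ m ∧ m ≤ j ∧ f j ≤ f m ∧ f k ≤ f m := by
      rcases le_total (f j) (f k) with h | h
      exacts [⟨k, le_rfl, hkj, h, le_rfl⟩, ⟨j, hkj, le_rfl, le_rfl, h⟩]
    obtain ⟨r, hr, hle⟩ := ih m p ((m, l) :: q) (by simp; omega) (hp.mono_left hmj)
      (.cons le_rfl (hmj.trans hjl) hq)
    refine ⟨(i, m) :: r, .cons hi (hik.trans hkm) hr, ?_⟩
    simp only [chainSum_cons] at hle ⊢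
    calc riseGain f c i j + chainSum (riseGain f c) p +
          (riseGain (-f) c k l + chainSum (riseGain (-f) c) q)
        ≤ riseGain f c i m + chainSum (riseGain f c) p +
          (riseGain (-f) c m l + chainSum (riseGain (-f) c) q) := by
          gcongr
          · exact riseGain_le_riseGain le_rfl hfj
          · exact riseGain_le_riseGain (by simpa using hfk) le_rfl
      _ ≤ jumpGain f c i m + chainSum (jumpGain f c) r := by
          rw [add_assoc]
          exact add_le_add (riseGain_le_jumpGain f c i m) hle
  by_cases hfall : c ≤ f k - f l
  · obtain ⟨r, hr, hle⟩ := ih l ((l, j) :: p) q (by simp; omega) (.cons le_rfl hlj hp) hq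
    refine ⟨(i, k) :: (k, l) :: r, .cons hi hik (.cons le_rfl hkl hr), ?_⟩
    simp only [chainSum_cons] at hle ⊢
    calc riseGain f c i j + chainSum (riseGain f c) p +
          (riseGain (-f) c k l + chainSum (riseGain (-f) c) q)
        ≤ riseGain f c i k + riseGain f c l j + chainSum (riseGain f c) p +
          (riseGain (-f) c k l + chainSum (riseGain (-f) c) q) := by
          gcongr
          exact riseGain_le_add_riseGain hfall
      _ = riseGain f c i k + (riseGain (-f) c k l +
          (riseGain f c l j + chainSum (riseGain f c) p + chainSum (riseGain (-f) c) q)) := by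
          ring
      _ ≤ jumpGain f c i k + (jumpGain f c k l + chainSum (jumpGain f c) r) := by
          gcongr
          · exact riseGain_le_jumpGain f c i k
          · simpa [jumpGain_neg] using riseGain_le_jumpGain (-f) c k l
  · obtain ⟨r, hr, hle⟩ := ih lb ((i, j) :: p) q (by simp; omega) (.cons hi hij hp)
      (hq.mono_left (hk.trans hkl))
    have hzero : riseGain (-f) c k l = 0 :=
      ENNReal.ofReal_eq_zero.2 (by simp only [Pi.neg_apply]; linarith)
    exact ⟨r, hr, by simpa [hzero] using hle⟩

theorem IntervalChain.mergeable {p q : List (ℝ × ℝ)} (hp : IntervalChain lb s p)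
    (hq : IntervalChain lb s q) : Mergeable f c lb s p q := by
  induction hN : p.length + q.length using Nat.strong_induction_on generalizing f lb p q with
  | _ N ih =>
  cases hp with
  | nil => exact mergeable_nil_left hq
  | @cons _ i j _ p hi hij hp =>
  cases hq with
  | nil => exact .of_neg (mergeable_nil_left (.cons hi hij hp))
  | @cons _ k l _ q hk hkl hq =>
  simp only [List.length_cons] at hN
  rcases le_total i k with hik | hki
  · exact mergeable_cons_cons (fun _ _ _ h hp hq => ih _ (by omega) hp hq rfl)
      hik hi hij hp hk hkl hq
  · exact .of_neg <| mergeable_cons_cons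
      (fun _ _ _ h hp hq => ih _ (by omega) hp hq rfl) hki hk hkl hq hi hij hp

end Merge

def seqCons (x : ℝ) (t : ℕ → ℝ) : ℕ → ℝ
  | 0 => x
  | i + 1 => t i

def partChain (t : ℕ → ℝ) (n : ℕ) : List (ℝ × ℝ) :=
  (List.range n).map fun i => (t i, t (i + 1))

section Partitions

variable {g : ℝ → ℝ → ℝ≥0∞} {x lb s : ℝ} {n : ℕ} {t : ℕ → ℝ}

lemma partSum_seqCons : partSum g (n + 1) (seqCons x t) = g x (t 0) + partSum g n t := by
  rw [partSum, Finset.sum_range_succ', add_comm]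
  rfl

lemma chainSum_partChain : chainSum g (partChain t n) = partSum g n t := by
  simp only [chainSum, partChain, partSum, List.map_map]
  rfl

namespace IsPart

lemma mono_left {x' : ℝ} (hx : x' ≤ x) (ht : IsPart x s n t) : IsPart x' s n t :=
  ⟨hx.trans ht.1, ht.2⟩

lemma seqCons (hx : x < t 0) (ht : IsPart lb s n t) : IsPart x s (n + 1) (seqCons x t) := by
  refine ⟨le_rfl, ht.2.1, fun i hi => ?_⟩
  cases i with
  | zero => exact hx
  | succ i => exact ht.2.2 i (by omega)

lemma tail (ht : IsPart lb s (n + 1) t) : IsPart (t 1) s n fun i => t (i + 1) :=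
  ⟨le_rfl, ht.2.1, fun i hi => ht.2.2 (i + 1) (by omega)⟩

lemma intervalChain (ht : IsPart lb s n t) : IntervalChain lb s (partChain t n) := by
  induction n generalizing lb t with
  | zero => exact .nil (ht.1.trans ht.2.1)
  | succ n ih =>
    have h := ih ht.tail
    simp only [partChain, List.range_succ_eq_map, List.map_cons, List.map_map] at h ⊢
    exact .cons ht.1 (ht.2.2 0 (by omega)).le h

lemma exists_head_eq (ht : IsPart x s n t) :
    ∃ n' t', IsPart x s n' t' ∧ t' 0 = x ∧ partSum g n t ≤ partSum g n' t' := by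
  rcases ht.1.lt_or_eq with hlt | heq
  · refine ⟨n + 1, _root_.seqCons x t, ht.seqCons hlt, rfl, ?_⟩
    rw [partSum_seqCons]
    exact le_add_self
  · exact ⟨n, t, ht, heq.symm, le_rfl⟩

lemma exists_cons (hg : ∀ x, g x x = 0) {y : ℝ} (hyx : y ≤ x) (ht : IsPart x s n t) :
    ∃ n' t', IsPart y s n' t' ∧ g y x + partSum g n t ≤ partSum g n' t' := by
  obtain ⟨n', t', ht', h0, hle⟩ := ht.exists_head_eq (g := g)
  rcases hyx.lt_or_eq with hlt | rfl
  · refine ⟨n' + 1, _root_.seqCons y t', ht'.seqCons (h0 ▸ hlt), ?_⟩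
    rw [partSum_seqCons, h0]
    gcongr
  · exact ⟨n', t', ht', by rwa [hg, zero_add]⟩

end IsPart

lemma IntervalChain.exists_isPart (hg : ∀ x, g x x = 0) {r : List (ℝ × ℝ)}
    (hr : IntervalChain x s r) : ∃ n t, IsPart x s n t ∧ chainSum g r ≤ partSum g n t := by
  induction hr with
  | @nil x s hxs => exact ⟨0, fun _ => s, ⟨hxs, le_rfl, by simp⟩, by simp⟩
  | cons hxy hyz _ ih =>
    obtain ⟨n, t, ht, hle⟩ := ih
    obtain ⟨n', t', ht', hle'⟩ := ht.exists_cons hg hyz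
    exact ⟨n', t', ht'.mono_left hxy, by simpa using (add_le_add_right hle _).trans hle'⟩

end Partitions

section TruncatedVariation

variable {a s : ℝ}

lemma iSup_isPart_add_iSup_isPart_le {F G : ℕ → (ℕ → ℝ) → ℝ≥0∞} {X : ℝ≥0∞} (has : a ≤ s)
    (h : ∀ n t m u, IsPart a s n t → IsPart a s m u → F n t + G m u ≤ X) :
    (⨆ (n : ℕ) (t : ℕ → ℝ) (_ : IsPart a s n t), F n t) +
      (⨆ (n : ℕ) (t : ℕ → ℝ) (_ : IsPart a s n t), G n t) ≤ X := by
  have hpart : ∃ p : ℕ × (ℕ → ℝ), IsPart a s p.1 p.2 := ⟨(0, fun _ => a), le_rfl, has, by simp⟩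
  simp only [← iSup_prod (f := fun p : ℕ × (ℕ → ℝ) => ⨆ _ : IsPart a s p.1 p.2, F p.1 p.2),
    ← iSup_prod (f := fun p : ℕ × (ℕ → ℝ) => ⨆ _ : IsPart a s p.1 p.2, G p.1 p.2)]
  exact ENNReal.biSup_add_biSup_le' hpart hpart fun p hp q hq => h _ _ _ _ hp hq

variable (f : ℝ → ℝ)

lemma tvc_le_utvc_add_utvc_neg (c : ℝ) : TVc f c a s ≤ UTVc f c a s + UTVc (-f) c a s := by
  refine iSup₂_le fun n t => iSup_le fun ht => ?_
  calc partSum (jumpGain f c) n t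
      ≤ partSum (fun x y => riseGain f c x y + riseGain (-f) c x y) n t :=
        Finset.sum_le_sum fun _ _ => jumpGain_le_riseGain_add_riseGain_neg f c _ _
    _ = partSum (riseGain f c) n t + partSum (riseGain (-f) c) n t := Finset.sum_add_distrib
    _ ≤ UTVc f c a s + UTVc (-f) c a s := by
        gcongr <;> exact le_iSup₂_of_le n t (le_iSup_of_le ht le_rfl)

lemma partSum_riseGain_add_partSum_riseGain_neg_le_tvc {c : ℝ} (hc : 0 ≤ c) {n m : ℕ}
    {t u : ℕ → ℝ} (ht : IsPart a s n t) (hu : IsPart a s m u) :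
    partSum (riseGain f c) n t + partSum (riseGain (-f) c) m u ≤ TVc f c a s := by
  obtain ⟨r, hr, hle⟩ := ht.intervalChain.mergeable (f := f) (c := c) hu.intervalChain
  obtain ⟨k, v, hv, hle'⟩ := hr.exists_isPart (jumpGain_self (f := f) hc)
  rw [chainSum_partChain, chainSum_partChain] at hle
  exact hle.trans (hle'.trans (le_iSup₂_of_le k v (le_iSup_of_le hv le_rfl)))

end TruncatedVariation

theorem tvc_eq_utvc_add_dtvc_general (a b : ℝ) (f : ℝ → ℝ) (c : ℝ) (hc : 0 < c) :
    ∀ s ∈ Set.Ioc a b, TVc f c a s = UTVc f c a s + DTVc f c a s := by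
  intro s hs
  rw [dtvc_eq_utvc_neg]
  refine le_antisymm (tvc_le_utvc_add_utvc_neg f c) ?_
  exact iSup_isPart_add_iSup_isPart_le hs.1.le fun n t m u ht hu =>
    partSum_riseGain_add_partSum_riseGain_neg_le_tvc f hc.le ht hu

/-- `TV^c = UTV^c + DTV^c` on every interval `[a, s]`, `s ∈ (a, b]`. -/
theorem tvc_eq_utvc_add_dtvc (a b : ℝ) (hab : a < b) (f : ℝ → ℝ)
    (hf : Cadlag f a b) (c : ℝ) (hc : 0 < c) :
    ∀ s ∈ Set.Ioc a b, TVc f c a s = UTVc f c a s + DTVc f c a s :=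
  tvc_eq_utvc_add_dtvc_general a b f c hc
end

section
/- For a càdlàg function f : [a,b] → ℝ and c > 0, the function f^{0,c}(s) := UTV^c(f,[a,s]) − DTV^c(f,[a,s]) satisfies |(f^{0,c}(s) − f^{0,c}(u)) − (f(s) − f(u))| ≤ c for all a ≤ u ≤ s ≤ b, i.e. its increments uniformly approximate the increments of f with accuracy c. -/
open Set Filter

/-!
The key estimate is
`UTV^c(f,[a,s]) - UTV^c(f,[a,u]) ≤ DTV^c(f,[a,s]) - DTV^c(f,[a,u]) + f s - f u + c`;
applied to `f` and to `-f`, which swaps `UTV^c` and `DTV^c`, it gives both halves of the claim.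
It is proved by induction on a partition of `[a, s]`: `φ = DTV^c(f, [a, ·])` satisfies
`φ x + (f x - f y - c)⁺ ≤ φ y`, so every upward jump beyond `u`, followed by the fall from its
end to `s`, is paid for by the growth of `f` and of `φ`, while the jump straddling `u` is cut
at `u`, which costs the single `c`. Both variations are finite: just left and just right of
each point a càdlàg function oscillates by less than `c / 2`, so there only a jump onto the
right endpoint survives the truncation, and a supremum argument carries finiteness from `a`
to `b`.
-/

namespace IsPart

variable {a b : ℝ} {n : ℕ} {t : ℕ → ℝ}

theorem strictMonoOn (h : IsPart a b n t) : StrictMonoOn t (Iic n) :=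
  strictMonoOn_Iic_of_lt_succ fun m hm => h.2.2 m hm

theorem mono_right (h : IsPart a b n t) {b' : ℝ} (hb : b ≤ b') : IsPart a b' n t :=
  ⟨h.1, h.2.1.trans hb, h.2.2⟩

theorem init (h : IsPart a b (n + 1) t) : IsPart a (t n) n t :=
  ⟨h.1, le_rfl, fun i hi => h.2.2 i (by omega)⟩

theorem extend (h : IsPart a b n t) {v b' : ℝ} (hv : t n < v) (hvb : v ≤ b') :
    IsPart a b' (n + 1) (Function.update t (n + 1) v) := by
  refine ⟨?_, by rwa [Function.update_self], fun i hi => ?_⟩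
  · rw [Function.update_of_ne (by omega)]
    exact h.1
  · rcases Nat.lt_or_ge i n with hin | hin
    · rw [Function.update_of_ne (by omega), Function.update_of_ne (by omega)]
      exact h.2.2 i hin
    · obtain rfl : i = n := by omega
      rwa [Function.update_of_ne (by omega), Function.update_self]

end IsPart

theorem isPart_const {a b : ℝ} (hab : a ≤ b) : IsPart a b 0 fun _ => a :=
  ⟨le_rfl, hab, fun _ hi => absurd hi (Nat.not_lt_zero _)⟩

noncomputable def upSum (f : ℝ → ℝ) (c : ℝ) (t : ℕ → ℝ) (n : ℕ) : ℝ :=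
  ∑ i ∈ Finset.range n, max (f (t (i + 1)) - f (t i) - c) 0

section UpSum

variable {f : ℝ → ℝ} {c : ℝ} {t : ℕ → ℝ} {n : ℕ}

@[simp]
theorem upSum_zero : upSum f c t 0 = 0 :=
  Finset.sum_range_zero _

theorem upSum_succ : upSum f c t (n + 1) = upSum f c t n + max (f (t (n + 1)) - f (t n) - c) 0 :=
  Finset.sum_range_succ _ _

theorem upSum_update_succ (v : ℝ) :
    upSum f c (Function.update t (n + 1) v) (n + 1) =
      upSum f c t n + max (f v - f (t n) - c) 0 := by
  rw [upSum_succ, Function.update_self, Function.update_of_ne (by omega)]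
  congr 1
  refine Finset.sum_congr rfl fun i hi => ?_
  have hi : i < n := Finset.mem_range.mp hi
  rw [Function.update_of_ne (by omega), Function.update_of_ne (by omega)]

theorem IsPart.exists_upSum_add_le {a x y : ℝ} (ht : IsPart a x n t) (hxy : x < y) :
    ∃ k q, IsPart a y k q ∧ upSum f c t n + max (f y - f x - c) 0 ≤ upSum f c q k := by
  rcases ht.2.1.lt_or_eq with hlt | heq
  · set q := Function.update t (n + 1) x
    have hq : q (n + 1) = x := Function.update_self _ _ _
    refine ⟨n + 2, Function.update q (n + 2) y,
      (ht.extend hlt le_rfl).extend (by rwa [Function.update_self]) le_rfl, ?_⟩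
    rw [upSum_update_succ, upSum_update_succ, hq]
    linarith [le_max_right (f x - f (t n) - c) 0]
  · refine ⟨n + 1, Function.update t (n + 1) y, ht.extend (heq ▸ hxy) le_rfl, ?_⟩
    rw [upSum_update_succ, heq]

-- `φ` plays the role of `DTV^c(f, [a, ·])`, which pays for the falls between upward jumps.
theorem upSum_le_of_forall_add_max_le {a u s₀ M : ℝ} (φ : ℝ → ℝ) (hau : a ≤ u)
    (hM : ∀ m p, IsPart a u m p → upSum f c p m ≤ M)
    (hφ : ∀ x y, u ≤ x → x ≤ y → y ≤ s₀ → φ x + max (f x - f y - c) 0 ≤ φ y) :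
    ∀ {n s t}, u ≤ s → s ≤ s₀ → IsPart a s n t →
      upSum f c t n ≤ M + (φ s - φ u) + (f s - f u) + c := by
  have hM0 : 0 ≤ M := by simpa using hM 0 _ (isPart_const hau)
  have base : ∀ s, u ≤ s → s ≤ s₀ → 0 ≤ (φ s - φ u) + (f s - f u) + c := by
    intro s hus hs
    linarith [hφ u s le_rfl hus hs, le_max_left (f u - f s - c) 0]
  intro n
  induction n with
  | zero =>
    intro s t hus hs _
    linarith [upSum_zero (f := f) (c := c) (t := t), base s hus hs]
  | succ n ih =>
    intro s t hus hs ht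
    rcases le_or_gt (t (n + 1)) u with hle | hgt
    · linarith [hM _ _ ⟨ht.1, hle, ht.2.2⟩, base s hus hs]
    have hts : t (n + 1) ≤ s := ht.2.1
    have hlast : t n < t (n + 1) := ht.2.2 n n.lt_succ_self
    rw [upSum_succ]
    rcases le_or_gt (f (t (n + 1)) - f (t n) - c) 0 with hd | hd
    · rw [max_eq_right hd, add_zero]
      exact ih hus hs (ht.init.mono_right (hlast.le.trans hts))
    rw [max_eq_left hd.le]
    have hφs := hφ _ _ hgt.le hts hs
    have hfall := le_max_left (f (t (n + 1)) - f s - c) 0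
    rcases le_or_gt u (t n) with hun | hnu
    · have hφn := hφ _ _ hun hlast.le (hts.trans hs)
      linarith [ih hun ((hlast.trans_le hts).le.trans hs) ht.init,
        le_max_right (f (t n) - f (t (n + 1)) - c) 0]
    · -- the jump over `u` is cut at `u`; its first part extends a partition of `[a, u]`
      have hcut := hM _ _ (ht.init.extend hnu le_rfl)
      rw [upSum_update_succ] at hcut
      linarith [hφ _ _ le_rfl hgt.le (hts.trans hs), le_max_left (f u - f (t n) - c) 0,
        le_max_right (f u - f (t (n + 1)) - c) 0]

end UpSum

section TruncatedVariation

variable {f : ℝ → ℝ} {c a b : ℝ}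

theorem UTVc_eq_iSup_upSum (f : ℝ → ℝ) (c a b : ℝ) :
    UTVc f c a b =
      ⨆ (n : ℕ) (t : ℕ → ℝ) (_ : IsPart a b n t), ENNReal.ofReal (upSum f c t n) := by
  unfold UTVc upSum
  refine iSup_congr fun n => iSup_congr fun t => iSup_congr fun _ => ?_
  rw [ENNReal.ofReal_sum_of_nonneg fun _ _ => le_max_right _ _]
  refine Finset.sum_congr rfl fun i _ => ?_
  rw [ENNReal.ofReal_max, ENNReal.ofReal_zero, max_eq_left zero_le]

theorem UTVc_neg (f : ℝ → ℝ) (c a b : ℝ) : UTVc (fun x => -f x) c a b = DTVc f c a b := by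
  unfold UTVc DTVc
  simp only [sub_neg_eq_add, neg_add_eq_sub]

theorem DTVc_neg (f : ℝ → ℝ) (c a b : ℝ) : DTVc (fun x => -f x) c a b = UTVc f c a b := by
  unfold UTVc DTVc
  simp only [sub_neg_eq_add, neg_add_eq_sub]

theorem ofReal_upSum_le_UTVc {n : ℕ} {t : ℕ → ℝ} (ht : IsPart a b n t) :
    ENNReal.ofReal (upSum f c t n) ≤ UTVc f c a b := by
  rw [UTVc_eq_iSup_upSum]
  exact le_iSup₂_of_le n t (le_iSup_of_le ht le_rfl)

theorem upSum_le_toReal_UTVc (hU : UTVc f c a b ≠ ⊤) {n : ℕ} {t : ℕ → ℝ}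
    (ht : IsPart a b n t) :
    upSum f c t n ≤ (UTVc f c a b).toReal :=
  (ENNReal.ofReal_le_iff_le_toReal hU).mp (ofReal_upSum_le_UTVc ht)

theorem UTVc_le_ofReal {M : ℝ} (h : ∀ n t, IsPart a b n t → upSum f c t n ≤ M) :
    UTVc f c a b ≤ ENNReal.ofReal M := by
  rw [UTVc_eq_iSup_upSum]
  exact iSup₂_le fun n t => iSup_le fun ht => ENNReal.ofReal_le_ofReal (h n t ht)

theorem toReal_UTVc_le (hab : a ≤ b) {M : ℝ}
    (h : ∀ n t, IsPart a b n t → upSum f c t n ≤ M) :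
    (UTVc f c a b).toReal ≤ M :=
  ENNReal.toReal_le_of_le_ofReal (by simpa using h 0 _ (isPart_const hab)) (UTVc_le_ofReal h)

theorem UTVc_mono {b b' : ℝ} (hb : b ≤ b') : UTVc f c a b ≤ UTVc f c a b' := by
  rw [UTVc_eq_iSup_upSum]
  exact iSup₂_le fun n t => iSup_le fun ht => ofReal_upSum_le_UTVc (ht.mono_right hb)

theorem UTVc_self : UTVc f c a a = 0 := by
  refine le_antisymm (ENNReal.ofReal_zero ▸ UTVc_le_ofReal fun n t ht => ?_) zero_le
  rcases n with _ | n
  · simp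
  · have := ht.strictMonoOn (Nat.zero_le _) (mem_Iic.mpr le_rfl) n.succ_pos
    linarith [ht.1, ht.2.1]

theorem toReal_UTVc_add_max_le (hc : 0 ≤ c) {x y : ℝ} (hax : a ≤ x) (hxy : x ≤ y)
    (hU : UTVc f c a y ≠ ⊤) :
    (UTVc f c a x).toReal + max (f y - f x - c) 0 ≤ (UTVc f c a y).toReal := by
  rcases hxy.lt_or_eq with hlt | rfl
  · rw [← le_sub_iff_add_le]
    refine toReal_UTVc_le hax fun n t ht => ?_
    obtain ⟨k, q, hq, hle⟩ := ht.exists_upSum_add_le (f := f) (c := c) hlt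
    linarith [upSum_le_toReal_UTVc hU hq]
  · simp [hc]

theorem toReal_DTVc_add_max_le (hc : 0 ≤ c) {x y : ℝ} (hax : a ≤ x) (hxy : x ≤ y)
    (hD : DTVc f c a y ≠ ⊤) :
    (DTVc f c a x).toReal + max (f x - f y - c) 0 ≤ (DTVc f c a y).toReal := by
  simp only [← UTVc_neg] at hD ⊢
  convert toReal_UTVc_add_max_le hc hax hxy hD using 3
  ring

theorem DTVc_mono {b b' : ℝ} (hb : b ≤ b') : DTVc f c a b ≤ DTVc f c a b' := by
  simpa only [← UTVc_neg] using UTVc_mono hb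

theorem toReal_UTVc_sub_le (hc : 0 ≤ c) {u s : ℝ} (hau : a ≤ u) (hus : u ≤ s)
    (hU : UTVc f c a s ≠ ⊤) (hD : DTVc f c a s ≠ ⊤) :
    (UTVc f c a s).toReal - (UTVc f c a u).toReal ≤
      (DTVc f c a s).toReal - (DTVc f c a u).toReal + (f s - f u) + c := by
  have hUu := ne_top_of_le_ne_top hU (UTVc_mono hus)
  have := toReal_UTVc_le (hau.trans hus) fun n t ht =>
    upSum_le_of_forall_add_max_le (fun x => (DTVc f c a x).toReal) hau
      (fun _ _ hp => upSum_le_toReal_UTVc hUu hp)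
      (fun x y hx hxy hy => toReal_DTVc_add_max_le hc (hau.trans hx) hxy
        (ne_top_of_le_ne_top hD (DTVc_mono hy)))
      hus le_rfl ht
  linarith

theorem UTVc_ne_top_of_abs_sub_le (hc : 0 < c) {x y l : ℝ} (hax : a ≤ x) (hxy : x ≤ y)
    (hx : UTVc f c a x ≠ ⊤) (hosc : ∀ z ∈ Ico x y, |f z - l| ≤ c / 4) :
    UTVc f c a y ≠ ⊤ := by
  refine ne_top_of_le_ne_top ENNReal.ofReal_ne_top <| UTVc_le_ofReal fun n t ht =>
    upSum_le_of_forall_add_max_le (fun z => if z < y then 0 else |f y - l|) hax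
      (fun _ _ hp => upSum_le_toReal_UTVc hx hp) (fun z w hz hzw hw => ?_) hxy le_rfl ht
  rcases hw.lt_or_eq with hwy | rfl
  · have hzy := hzw.trans_lt hwy
    have := abs_le.mp (hosc z ⟨hz, hzy⟩)
    have := abs_le.mp (hosc w ⟨hz.trans hzw, hwy⟩)
    simp only [hwy, hzy, if_true, zero_add, max_le_iff, le_refl, and_true]
    linarith
  · rcases hzw.lt_or_eq with hzw | rfl
    · have := abs_le.mp (hosc z ⟨hz, hzw⟩)
      simp only [hzw, lt_irrefl, if_true, if_false, zero_add, max_le_iff, abs_nonneg, and_true]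
      linarith [neg_abs_le (f w - l)]
    · simp [hc.le]

theorem UTVc_ne_top {b : ℝ} (hf : Cadlag f a b) (hc : 0 < c) (hab : a ≤ b) :
    UTVc f c a b ≠ ⊤ := by
  set S := {x | x ≤ b ∧ UTVc f c a x ≠ ⊤}
  have haS : a ∈ S := ⟨hab, by simp [UTVc_self]⟩
  have hbdd : BddAbove S := ⟨b, fun _ hx => hx.1⟩
  set m := sSup S
  have ham : a ≤ m := le_csSup hbdd haS
  have hmb : m ≤ b := csSup_le ⟨a, haS⟩ fun _ hx => hx.1
  have hc4 : 0 < c / 4 := by positivity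
  have hm : UTVc f c a m ≠ ⊤ := by
    rcases ham.eq_or_lt with ham | ham
    · simp [← ham, UTVc_self]
    obtain ⟨l, hl⟩ := hf.2 m ⟨ham, hmb⟩
    obtain ⟨x', hx'm, hx'⟩ :=
      mem_nhdsLT_iff_exists_Ioo_subset.mp (hl (Metric.closedBall_mem_nhds l hc4))
    obtain ⟨x, hxS, hx⟩ := exists_lt_of_lt_csSup ⟨a, haS⟩ (max_lt hx'm ham)
    refine UTVc_ne_top_of_abs_sub_le (l := l) hc ((le_max_right _ _).trans hx.le)
      (le_csSup hbdd hxS) hxS.2 fun z hz => ?_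
    simpa [Real.dist_eq] using hx' ⟨(le_max_left _ _).trans_lt (hx.trans_le hz.1), hz.2⟩
  rcases hmb.lt_or_eq with hmb | hmb
  · obtain ⟨y', hmy', hy'⟩ := mem_nhdsGT_iff_exists_Ioo_subset.mp
      (hf.1 m ⟨ham, hmb⟩ (Metric.closedBall_mem_nhds (f m) hc4))
    have hyS : min b y' ∈ S := by
      refine ⟨min_le_left _ _, UTVc_ne_top_of_abs_sub_le (l := f m) hc ham
        (le_min hmb.le hmy'.le) hm fun z hz => ?_⟩
      rcases hz.1.eq_or_lt with hmz | hmz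
      · simpa [← hmz] using hc4.le
      · simpa [Real.dist_eq] using hy' ⟨hmz, hz.2.trans_le (min_le_right _ _)⟩
    exact absurd (le_csSup hbdd hyS) (lt_min hmb hmy').not_ge
  · rwa [← hmb]

theorem Cadlag.neg {b : ℝ} (hf : Cadlag f a b) : Cadlag (fun x => -f x) a b :=
  ⟨fun t ht => (hf.1 t ht).neg, fun t ht => let ⟨l, hl⟩ := hf.2 t ht; ⟨-l, hl.neg⟩⟩

theorem DTVc_ne_top {b : ℝ} (hf : Cadlag f a b) (hc : 0 < c) (hab : a ≤ b) :
    DTVc f c a b ≠ ⊤ := by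
  rw [← UTVc_neg]
  exact UTVc_ne_top hf.neg hc hab

end TruncatedVariation

theorem increments_approx_general (a b : ℝ) (f : ℝ → ℝ)
    (hf : Cadlag f a b) (c : ℝ) (hc : 0 < c) :
    ∀ u s : ℝ, a ≤ u → u ≤ s → s ≤ b →
      |(((UTVc f c a s).toReal - (DTVc f c a s).toReal) -
        ((UTVc f c a u).toReal - (DTVc f c a u).toReal)) - (f s - f u)| ≤ c := by
  intro u s hau hus hsb
  have hab : a ≤ b := hau.trans (hus.trans hsb)
  have hU : UTVc f c a s ≠ ⊤ := ne_top_of_le_ne_top (UTVc_ne_top hf hc hab) (UTVc_mono hsb)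
  have hD : DTVc f c a s ≠ ⊤ := ne_top_of_le_ne_top (DTVc_ne_top hf hc hab) (DTVc_mono hsb)
  have hup := toReal_UTVc_sub_le hc.le hau hus hU hD
  have hdown := toReal_UTVc_sub_le (f := fun x => -f x) hc.le hau hus
    (by rwa [UTVc_neg]) (by rwa [DTVc_neg])
  simp only [UTVc_neg, DTVc_neg] at hdown
  rw [abs_le]
  constructor <;> linarith

/-- The increments of `s ↦ UTV^c(f,[a,s]) − DTV^c(f,[a,s])` uniformly
approximate the increments of `f` with accuracy `c`. -/
theorem increments_approx (a b : ℝ) (hab : a < b) (f : ℝ → ℝ)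
    (hf : Cadlag f a b) (c : ℝ) (hc : 0 < c) :
    ∀ u s : ℝ, a ≤ u → u ≤ s → s ≤ b →
      |(((UTVc f c a s).toReal - (DTVc f c a s).toReal) -
        ((UTVc f c a u).toReal - (DTVc f c a u).toReal)) - (f s - f u)| ≤ c :=
  increments_approx_general a b f hf c hc
end

section
/- For a càdlàg function f : [a,b] → ℝ and c > 0, the total variation of the function f^{0,c}(s) = UTV^c(f,[a,s]) − DTV^c(f,[a,s]) on [a,s] equals TV^c(f,[a,s]) for every s ∈ (a,b]; in particular the decomposition f^{0,c} = UTV^c − DTV^c is a minimal (Jordan) decomposition. -/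
/-!
Write `U t`, `D t`, `V t` for the upward, downward and two-sided truncated variations of `f` on
`[a, t]`, so that `f0c = U - D`. All of them are finite: `V` is subadditive up to `c`, and on each
side of a point a càdlàg function eventually oscillates by less than `c`, so continuous induction
gives `V s < ∞`.

`U` and `D` are suprema of `∑ (f yᵢ - f xᵢ - c)` (for `f`, resp. `-f`) over chains of pairs
`a ≤ x₁ ≤ y₁ ≤ x₂ ≤ ⋯ ≤ b`. As `U` and `D` are nondecreasing, `TV(f0c) ≤ U s + D s`. An up-chain
and a down-chain merge into a single partition whose truncated sum is at least the sum of both: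
two crossing pairs `(u, v)`, `(p, q)` with `u ≤ p < v` are traded for `(u, p)` and a pair between
`q` and `v`. Hence `U s + D s ≤ V s`. Conversely, for `x ≤ y` a down-chain on `[a, y]` splits
into a down-chain on `[a, x]` and an up-chain on `[x, y]` gaining `f y - f x - c`, so
`f y - f x - c ≤ f0c y - f0c x`; with the same for `-f`, `|f y - f x| - c ≤ |f0c y - f0c x|`,
which gives `V s ≤ TV(f0c)`.
-/

open Set Filter

open scoped ENNReal Topology

section Partition

variable {a b : ℝ} {n : ℕ} {t : ℕ → ℝ}

lemma IsPart.monotone (h : IsPart a b n t) {i j : ℕ} (hij : i ≤ j) (hjn : j ≤ n) :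
    t i ≤ t j := by
  induction j, hij using Nat.le_induction with
  | base => exact le_rfl
  | succ j _ ih => exact (ih (by omega)).trans (h.2.2 j (by omega)).le

lemma IsPart.mem_Icc (h : IsPart a b n t) {i : ℕ} (hi : i ≤ n) : t i ∈ Icc a b :=
  ⟨h.1.trans (h.monotone i.zero_le hi), (h.monotone hi le_rfl).trans h.2.1⟩

lemma IsPart.tail_s9 (h : IsPart a b (n + 1) t) : IsPart (t 1) b n (fun i => t (i + 1)) :=
  ⟨le_rfl, h.2.1, fun i hi => h.2.2 (i + 1) (by omega)⟩

lemma IsPart.cons (h : IsPart (t 0) b n t) {x : ℝ} (hax : a ≤ x) (hx : x < t 0) :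
    IsPart a b (n + 1) (Stream'.cons x t) :=
  ⟨hax, h.2.1, fun i hi => by cases i with
    | zero => exact hx
    | succ i => exact h.2.2 i (by omega)⟩

end Partition

noncomputable def partitionSum (g : ℝ → ℝ → ℝ) (n : ℕ) (t : ℕ → ℝ) : ℝ≥0∞ :=
  ∑ i ∈ Finset.range n, ENNReal.ofReal (g (t i) (t (i + 1)))

noncomputable def partitionSup (g : ℝ → ℝ → ℝ) (a b : ℝ) : ℝ≥0∞ :=
  ⨆ (n : ℕ) (t : ℕ → ℝ) (_ : IsPart a b n t), partitionSum g n t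

section PartitionSup

variable {g : ℝ → ℝ → ℝ} {a b x y : ℝ} {n : ℕ} {t : ℕ → ℝ}

lemma partitionSum_succ (g : ℝ → ℝ → ℝ) (n : ℕ) (t : ℕ → ℝ) :
    partitionSum g (n + 1) t
      = ENNReal.ofReal (g (t 0) (t 1)) + partitionSum g n (fun i => t (i + 1)) := by
  rw [partitionSum, Finset.sum_range_succ', add_comm]
  rfl

lemma partitionSum_le_partitionSup (h : IsPart a b n t) :
    partitionSum g n t ≤ partitionSup g a b :=
  le_iSup_of_le n <| le_iSup_of_le t <| le_iSup_of_le h le_rfl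

lemma partitionSup_le {X : ℝ≥0∞} (h : ∀ n t, IsPart a b n t → partitionSum g n t ≤ X) :
    partitionSup g a b ≤ X :=
  iSup_le fun n => iSup_le fun t => iSup_le (h n t)

lemma partitionSup_mono {g' : ℝ → ℝ → ℝ} (h : ∀ x y, a ≤ x → x < y → y ≤ b → g x y ≤ g' x y) :
    partitionSup g a b ≤ partitionSup g' a b :=
  partitionSup_le fun n t ht => (Finset.sum_le_sum fun i hi => by
    have hi := Finset.mem_range.mp hi
    exact ENNReal.ofReal_le_ofReal <| h _ _ (ht.mem_Icc hi.le).1 (ht.2.2 i hi)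
      (ht.mem_Icc hi).2).trans (partitionSum_le_partitionSup ht)

lemma partitionSup_mono_right {b' : ℝ} (h : b ≤ b') : partitionSup g a b ≤ partitionSup g a b' :=
  partitionSup_le fun _ _ ht => partitionSum_le_partitionSup ⟨ht.1, ht.2.1.trans h, ht.2.2⟩

lemma partitionSup_anti_left {a' : ℝ} (h : a' ≤ a) : partitionSup g a b ≤ partitionSup g a' b :=
  partitionSup_le fun _ _ ht => partitionSum_le_partitionSup ⟨h.trans ht.1, ht.2.1, ht.2.2⟩

lemma ofReal_add_partitionSum_le (hax : a ≤ x) (hxy : x < y) (ht : IsPart y b n t) :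
    ENNReal.ofReal (g x y) + partitionSum g n t ≤ partitionSup g a b := by
  have ht₀ : IsPart (t 0) b n t := ⟨le_rfl, ht.2.1, ht.2.2⟩
  rcases ht.1.eq_or_lt with rfl | hy
  · calc _ = partitionSum g (n + 1) (Stream'.cons x t) := (partitionSum_succ g n _).symm
      _ ≤ _ := partitionSum_le_partitionSup (ht₀.cons hax hxy)
  · have hyt : IsPart (Stream'.cons y t 0) b (n + 1) (Stream'.cons y t) := ht₀.cons le_rfl hy
    calc _ ≤ ENNReal.ofReal (g x y) + (ENNReal.ofReal (g y (t 0)) + partitionSum g n t) := by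
          gcongr; exact le_add_self
      _ = partitionSum g (n + 1 + 1) (Stream'.cons x (Stream'.cons y t)) :=
          (congrArg _ (partitionSum_succ g n (Stream'.cons y t)).symm).trans
            (partitionSum_succ g (n + 1) (Stream'.cons x (Stream'.cons y t))).symm
      _ ≤ _ := partitionSum_le_partitionSup (hyt.cons hax hxy)

lemma partitionSup_prepend (hg : ∀ z, g z z ≤ 0) (hax : a ≤ x) (hxy : x ≤ y) (hyb : y ≤ b) :
    ENNReal.ofReal (g x y) + partitionSup g y b ≤ partitionSup g a b := by
  rcases hxy.eq_or_lt with rfl | hxy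
  · rw [ENNReal.ofReal_of_nonpos (hg x), zero_add]
    exact partitionSup_anti_left hax
  rw [partitionSup, ENNReal.add_iSup]
  refine iSup_le fun n => ?_
  rw [ENNReal.add_iSup]
  refine iSup_le fun t => ?_
  by_cases ht : IsPart y b n t
  · rw [iSup_pos ht]
    exact ofReal_add_partitionSum_le hax hxy ht
  · rw [iSup_neg ht, bot_eq_zero, add_zero]
    simpa [partitionSum] using
      ofReal_add_partitionSum_le (g := g) (n := 0) (t := fun _ => y) hax hxy ⟨le_rfl, hyb, by simp⟩

lemma ofReal_le_partitionSup (hg : ∀ z, g z z ≤ 0) (hax : a ≤ x) (hxy : x ≤ y) (hyb : y ≤ b) :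
    ENNReal.ofReal (g x y) ≤ partitionSup g a b :=
  le_self_add.trans (partitionSup_prepend hg hax hxy hyb)

end PartitionSup

section PartitionSupBounds

variable {g : ℝ → ℝ → ℝ} {a b : ℝ}

lemma partitionSup_le_add (hg : ∀ z, g z z ≤ 0) {C : ℝ}
    (hsplit : ∀ x y z, x ≤ y → y ≤ z → g x z ≤ g x y + g y z + C) {m : ℝ} (ham : a ≤ m) :
    partitionSup g a b ≤ partitionSup g a m + partitionSup g m b + ENNReal.ofReal C := by
  refine partitionSup_le fun n t ht => ?_
  induction n generalizing a t with
  | zero => exact zero_le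
  | succ n ih =>
    have h01 : t 0 < t 1 := ht.2.2 0 n.succ_pos
    rcases lt_or_ge m (t 0) with hm0 | hm0
    · exact (partitionSum_le_partitionSup ⟨hm0.le, ht.2.1, ht.2.2⟩).trans
        (le_add_right le_add_self)
    rw [partitionSum_succ]
    rcases le_or_gt (t 1) m with hm1 | hm1
    · calc _ ≤ ENNReal.ofReal (g (t 0) (t 1))
              + (partitionSup g (t 1) m + partitionSup g m b + ENNReal.ofReal C) := by
            gcongr; exact ih hm1 _ ht.tail_s9
        _ = (ENNReal.ofReal (g (t 0) (t 1)) + partitionSup g (t 1) m)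
              + partitionSup g m b + ENNReal.ofReal C := by ring
        _ ≤ _ := by gcongr; exact partitionSup_prepend hg ht.1 h01.le hm1
    · calc _ ≤ ENNReal.ofReal (g (t 0) m) + ENNReal.ofReal (g m (t 1)) + ENNReal.ofReal C
              + partitionSum g n (fun i => t (i + 1)) := by
            gcongr
            refine (ENNReal.ofReal_le_ofReal (hsplit _ _ _ hm0 hm1.le)).trans ?_
            exact ENNReal.ofReal_add_le.trans (by gcongr; exact ENNReal.ofReal_add_le)
        _ = ENNReal.ofReal (g (t 0) m)
              + (ENNReal.ofReal (g m (t 1)) + partitionSum g n (fun i => t (i + 1)))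
              + ENNReal.ofReal C := by ring
        _ ≤ _ := by
            gcongr
            · exact ofReal_le_partitionSup hg ht.1 hm0 le_rfl
            · exact ofReal_add_partitionSum_le le_rfl hm1 ht.tail_s9

lemma partitionSup_le_ofReal {B : ℝ} (hinner : ∀ y z, a ≤ y → y < z → z < b → g y z ≤ 0)
    (hlast : ∀ y, a ≤ y → y < b → g y b ≤ B) : partitionSup g a b ≤ ENNReal.ofReal B := by
  refine partitionSup_le fun n t ht => ?_
  induction n generalizing a t with
  | zero => exact zero_le
  | succ n ih =>
    have h01 : t 0 < t 1 := ht.2.2 0 n.succ_pos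
    rw [partitionSum_succ]
    rcases (ht.mem_Icc n.succ_pos).2.lt_or_eq with h1 | h1
    · rw [ENNReal.ofReal_of_nonpos (hinner _ _ ht.1 h01 h1), zero_add]
      exact ih (fun y z hy => hinner y z (ht.1.trans (h01.le.trans hy)))
        (fun y hy => hlast y (ht.1.trans (h01.le.trans hy))) _ ht.tail_s9
    · cases n with
      | zero => simpa [partitionSum, h1] using ENNReal.ofReal_le_ofReal (hlast _ ht.1 (h1 ▸ h01))
      | succ n =>
        exfalso
        linarith [ht.2.2 1 (by omega), (ht.mem_Icc (i := 2) (by omega)).2]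

lemma partitionSup_le_ofReal_sub {φ : ℝ → ℝ} (hφ : MonotoneOn φ (Icc a b))
    (h : ∀ x y, a ≤ x → x < y → y ≤ b → g x y ≤ φ y - φ x) (hab : a ≤ b) :
    partitionSup g a b ≤ ENNReal.ofReal (φ b - φ a) := by
  refine partitionSup_le fun n t ht => ?_
  induction n generalizing a t with
  | zero => exact zero_le
  | succ n ih =>
    have h01 : t 0 < t 1 := ht.2.2 0 n.succ_pos
    have ht₁ := ht.mem_Icc n.succ_pos
    have hφ₀₁ : φ (t 0) ≤ φ (t 1) := hφ (ht.mem_Icc (Nat.zero_le _)) ht₁ h01.le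
    rw [partitionSum_succ]
    calc _ ≤ ENNReal.ofReal (φ (t 1) - φ (t 0)) + ENNReal.ofReal (φ b - φ (t 1)) := by
          gcongr
          · exact h _ _ ht.1 h01 ht₁.2
          · exact ih (hφ.mono (Icc_subset_Icc_left ht₁.1))
              (fun x y hx => h x y (ht₁.1.trans hx)) ht₁.2 _ ht.tail_s9
      _ = ENNReal.ofReal (φ b - φ (t 0)) := by
          rw [← ENNReal.ofReal_add (by linarith) (by linarith [hφ ht₁ ⟨hab, le_rfl⟩ ht₁.2])]
          ring_nf
      _ ≤ _ := ENNReal.ofReal_le_ofReal <| by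
          linarith [hφ ⟨le_rfl, hab⟩ (ht.mem_Icc (Nat.zero_le _)) ht.1]

end PartitionSupBounds

section TruncatedVariation

variable {E : Type*} [PseudoMetricSpace E] {f : ℝ → E} {c a b x : ℝ}

lemma TVc_eq_partitionSup (f : ℝ → E) (c a b : ℝ) :
    TVc f c a b = partitionSup (fun x y => dist (f y) (f x) - c) a b := rfl

lemma TVc_le_add (hc : 0 ≤ c) {m : ℝ} (ham : a ≤ m) :
    TVc f c a b ≤ TVc f c a m + TVc f c m b + ENNReal.ofReal c := by
  simp only [TVc_eq_partitionSup]
  exact partitionSup_le_add (fun z => by simpa using hc)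
    (fun x y z _ _ => by linarith [dist_triangle (f z) (f y) (f x)]) ham

lemma ofReal_add_le_TVc (hc : 0 ≤ c) {y r T : ℝ} (hax : a ≤ x) (hxy : x ≤ y) (hyb : y ≤ b)
    (hr : r ≤ dist (f y) (f x) - c) (hT : ENNReal.ofReal T ≤ TVc f c y b) :
    ENNReal.ofReal (r + T) ≤ TVc f c a b :=
  calc _ ≤ ENNReal.ofReal (dist (f y) (f x) - c) + TVc f c y b :=
        ENNReal.ofReal_add_le.trans (by gcongr)
    _ ≤ TVc f c a b := partitionSup_prepend (g := fun x y => dist (f y) (f x) - c)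
        (fun z => by simpa using hc) hax hxy hyb

lemma TVc_self (f : ℝ → E) (c a : ℝ) : TVc f c a a = 0 := by
  rw [TVc_eq_partitionSup]
  exact le_antisymm ((partitionSup_le_ofReal (B := 0) (fun _ _ h₁ h₂ h₃ => by linarith)
    fun _ h₁ h₂ => by linarith).trans_eq ENNReal.ofReal_zero) zero_le

lemma eventually_TVc_eq_zero (hc : 0 < c) (hx : Tendsto f (𝓝[>] x) (𝓝 (f x))) :
    ∀ᶠ y in 𝓝[>] x, TVc f c x y = 0 := by
  obtain ⟨y₀, hy₀, hnear⟩ := mem_nhdsGT_iff_exists_Ioo_subset.mp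
    (hx.eventually (Metric.ball_mem_nhds (f x) (half_pos hc)))
  filter_upwards [Ioo_mem_nhdsGT hy₀] with y hy
  have hclose : ∀ z, x ≤ z → z ≤ y → dist (f z) (f x) < c / 2 := fun z hxz hzy => by
    rcases hxz.eq_or_lt with rfl | hxz
    · simpa using half_pos hc
    · exact hnear ⟨hxz, hzy.trans_lt hy.2⟩
  have hsmall : ∀ z z', x ≤ z → z ≤ z' → z' ≤ y → dist (f z') (f z) - c ≤ 0 :=
    fun z z' h₁ h₂ h₃ => by
      linarith [dist_triangle_right (f z') (f z) (f x), hclose z h₁ (h₂.trans h₃),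
        hclose z' (h₁.trans h₂) h₃]
  rw [TVc_eq_partitionSup]
  refine le_antisymm ?_ zero_le
  refine (partitionSup_le_ofReal (B := 0) (fun z z' h₁ h₂ h₃ => hsmall z z' h₁ h₂.le h₃.le)
    fun z h₁ h₂ => hsmall z y h₁ h₂.le le_rfl).trans_eq ENNReal.ofReal_zero

lemma eventually_TVc_le {l : E} (hc : 0 < c) (hx : Tendsto f (𝓝[<] x) (𝓝 l)) :
    ∀ᶠ w in 𝓝[<] x, TVc f c w x ≤ ENNReal.ofReal (dist (f x) l) := by
  obtain ⟨w₀, hw₀, hnear⟩ := mem_nhdsLT_iff_exists_Ioo_subset.mp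
    (hx.eventually (Metric.ball_mem_nhds l (half_pos hc)))
  filter_upwards [Ioo_mem_nhdsLT hw₀] with w hw
  have hclose : ∀ z, w ≤ z → z < x → dist (f z) l < c / 2 := fun z hwz hzx =>
    hnear ⟨hw.1.trans_le hwz, hzx⟩
  rw [TVc_eq_partitionSup]
  refine partitionSup_le_ofReal (fun z z' h₁ h₂ h₃ => ?_) fun z h₁ h₂ => ?_
  · linarith [dist_triangle_right (f z') (f z) l, hclose z h₁ (h₂.trans h₃),
      hclose z' (h₁.trans h₂.le) h₃]
  · linarith [dist_triangle (f x) l (f z), dist_comm (f z) l, hclose z h₁ h₂]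

lemma Cadlag.mono_right (hf : Cadlag f a b) {b' : ℝ} (h : b' ≤ b) : Cadlag f a b' :=
  ⟨fun t ht => hf.1 t ⟨ht.1, ht.2.trans_le h⟩, fun t ht => hf.2 t ⟨ht.1, ht.2.trans h⟩⟩

lemma Cadlag.TVc_ne_top (hf : Cadlag f a b) (hab : a ≤ b) (hc : 0 < c) : TVc f c a b ≠ ⊤ := by
  set A := {x | x ∈ Icc a b ∧ TVc f c a x ≠ ⊤}
  have haA : a ∈ A := ⟨⟨le_rfl, hab⟩, by simp [TVc_self]⟩
  have hbdd : BddAbove A := ⟨b, fun x hx => hx.1.2⟩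
  have ham : a ≤ sSup A := le_csSup hbdd haA
  have hmb : sSup A ≤ b := csSup_le ⟨a, haA⟩ fun x hx => hx.1.2
  have hmA : TVc f c a (sSup A) ≠ ⊤ := by
    rcases ham.eq_or_lt with h | ham
    · exact h ▸ haA.2
    obtain ⟨l, hl⟩ := hf.2 _ ⟨ham, hmb⟩
    obtain ⟨w, hw, hTV⟩ := mem_nhdsLT_iff_exists_Ioo_subset.mp (eventually_TVc_le hc hl)
    obtain ⟨x, hxA, hwx⟩ := exists_lt_of_lt_csSup ⟨a, haA⟩ (max_lt hw ham)
    rcases (le_csSup hbdd hxA).eq_or_lt with hxm | hxm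
    · exact hxm ▸ hxA.2
    refine ne_top_of_le_ne_top ?_ (TVc_le_add hc.le hxA.1.1)
    exact ENNReal.add_ne_top.mpr ⟨ENNReal.add_ne_top.mpr ⟨hxA.2, ne_top_of_le_ne_top
      ENNReal.ofReal_ne_top (hTV ⟨(le_max_left _ _).trans_lt hwx, hxm⟩)⟩, ENNReal.ofReal_ne_top⟩
  rcases hmb.eq_or_lt with h | hmb
  · exact h ▸ hmA
  obtain ⟨y, hy, hmy, hyb⟩ :=
    ((eventually_TVc_eq_zero hc (hf.1 _ ⟨ham, hmb⟩)).and (Ioc_mem_nhdsGT hmb)).exists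
  have hyA : y ∈ A := ⟨⟨ham.trans hmy.le, hyb⟩, ne_top_of_le_ne_top
    (by simp [hy, hmA]) (TVc_le_add hc.le ham)⟩
  exact absurd (le_csSup hbdd hyA) hmy.not_ge

end TruncatedVariation

section UpDown

variable {f : ℝ → ℝ} {c a b : ℝ}

lemma UTVc_eq_partitionSup (f : ℝ → ℝ) (c a b : ℝ) :
    UTVc f c a b = partitionSup (fun x y => f y - f x - c) a b := rfl

lemma DTVc_eq_UTVc_neg (f : ℝ → ℝ) (c a b : ℝ) : DTVc f c a b = UTVc (-f) c a b := by
  simp only [DTVc, UTVc, Pi.neg_apply, neg_sub_neg]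

lemma TVc_neg (f : ℝ → ℝ) (c a b : ℝ) : TVc (-f) c a b = TVc f c a b := by
  simp only [TVc, Pi.neg_apply, dist_neg_neg]

lemma UTVc_mono_right {b' : ℝ} (h : b ≤ b') : UTVc f c a b ≤ UTVc f c a b' :=
  partitionSup_mono_right (g := fun x y => f y - f x - c) h

lemma DTVc_mono_right {b' : ℝ} (h : b ≤ b') : DTVc f c a b ≤ DTVc f c a b' :=
  partitionSup_mono_right (g := fun x y => f x - f y - c) h

lemma UTVc_le_TVc : UTVc f c a b ≤ TVc f c a b := by
  rw [UTVc_eq_partitionSup, TVc_eq_partitionSup]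
  exact partitionSup_mono fun x y _ _ _ => by
    rw [Real.dist_eq]
    linarith [le_abs_self (f y - f x)]

lemma DTVc_le_TVc : DTVc f c a b ≤ TVc f c a b := by
  simpa only [DTVc_eq_UTVc_neg, TVc_neg] using UTVc_le_TVc (f := -f)

end UpDown

/-- Pairs may be degenerate (`x = y`); such a pair contributes `-c ≤ 0` to `pairSum`. -/
def IsPairChain : ℝ → ℝ → List (ℝ × ℝ) → Prop
  | a, b, [] => a ≤ b
  | a, b, p :: l => a ≤ p.1 ∧ p.1 ≤ p.2 ∧ IsPairChain p.2 b l

def pairSum (f : ℝ → ℝ) (c : ℝ) (l : List (ℝ × ℝ)) : ℝ :=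
  (l.map fun p => f p.2 - f p.1 - c).sum

section PairChain

variable {f : ℝ → ℝ} {c a b : ℝ} {l l₁ l₂ : List (ℝ × ℝ)}

@[simp] lemma pairSum_nil : pairSum f c [] = 0 := rfl

@[simp] lemma pairSum_cons (p : ℝ × ℝ) (l : List (ℝ × ℝ)) :
    pairSum f c (p :: l) = f p.2 - f p.1 - c + pairSum f c l := rfl

lemma pairSum_append : pairSum f c (l₁ ++ l₂) = pairSum f c l₁ + pairSum f c l₂ := by
  simp [pairSum]

lemma IsPairChain.le : ∀ {a : ℝ} {l : List (ℝ × ℝ)}, IsPairChain a b l → a ≤ b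
  | _, [], h => h
  | _, _ :: _, h => h.1.trans (h.2.1.trans h.2.2.le)

lemma IsPairChain.anti_left {a' : ℝ} (h : IsPairChain a b l) (ha : a' ≤ a) :
    IsPairChain a' b l := by
  cases l with
  | nil => exact ha.trans h
  | cons p l => exact ⟨ha.trans h.1, h.2⟩

lemma IsPairChain.append {m : ℝ} :
    ∀ {a : ℝ} {l₁ : List (ℝ × ℝ)}, IsPairChain a m l₁ → IsPairChain m b l₂ →
      IsPairChain a b (l₁ ++ l₂)
  | _, [], h₁, h₂ => h₂.anti_left h₁
  | _, _ :: _, h₁, h₂ => ⟨h₁.1, h₁.2.1, h₁.2.2.append h₂⟩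

lemma ofReal_pairSum_le_UTVc (hc : 0 ≤ c) :
    ∀ {a : ℝ} {l : List (ℝ × ℝ)}, IsPairChain a b l →
      ENNReal.ofReal (pairSum f c l) ≤ UTVc f c a b
  | _, [], _ => by simp
  | a, (x, y) :: l, ⟨hax, hxy, hl⟩ => calc
      _ ≤ ENNReal.ofReal (f y - f x - c) + ENNReal.ofReal (pairSum f c l) :=
        ENNReal.ofReal_add_le
      _ ≤ ENNReal.ofReal (f y - f x - c) + UTVc f c y b := by
        gcongr; exact ofReal_pairSum_le_UTVc hc hl
      _ ≤ UTVc f c a b := partitionSup_prepend (g := fun x y => f y - f x - c)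
        (fun z => by simpa using hc) hax hxy hl.le

lemma pairSum_le_toReal_UTVc (hc : 0 ≤ c) (hU : UTVc f c a b ≠ ⊤) (hl : IsPairChain a b l) :
    pairSum f c l ≤ (UTVc f c a b).toReal :=
  (ENNReal.ofReal_le_iff_le_toReal hU).mp (ofReal_pairSum_le_UTVc hc hl)

lemma exists_pairChain_of_isPart {n : ℕ} {t : ℕ → ℝ} (ht : IsPart a b n t) :
    ∃ l, IsPairChain a b l ∧ 0 ≤ pairSum f c l ∧
      partitionSum (fun x y => f y - f x - c) n t ≤ ENNReal.ofReal (pairSum f c l) := by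
  induction n generalizing a t with
  | zero => exact ⟨[], ht.1.trans ht.2.1, le_rfl, by simp [partitionSum]⟩
  | succ n ih =>
    have h01 : t 0 < t 1 := ht.2.2 0 n.succ_pos
    obtain ⟨l, hl, hl₀, hsum⟩ := ih ht.tail_s9
    rw [partitionSum_succ]
    by_cases hpos : 0 ≤ f (t 1) - f (t 0) - c
    · refine ⟨(t 0, t 1) :: l, ⟨ht.1, h01.le, hl⟩, by simp only [pairSum_cons]; linarith, ?_⟩
      rw [pairSum_cons, ENNReal.ofReal_add hpos hl₀]
      gcongr
    · refine ⟨l, hl.anti_left (ht.1.trans h01.le), hl₀, ?_⟩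
      rwa [ENNReal.ofReal_of_nonpos (by linarith), zero_add]

lemma UTVc_le_ofReal_s9 {B : ℝ} (h : ∀ l, IsPairChain a b l → pairSum f c l ≤ B) :
    UTVc f c a b ≤ ENNReal.ofReal B :=
  partitionSup_le (g := fun x y => f y - f x - c) fun _ _ ht => by
    obtain ⟨l, hl, -, hsum⟩ := exists_pairChain_of_isPart (f := f) (c := c) ht
    exact hsum.trans (ENNReal.ofReal_le_ofReal (h l hl))

lemma toReal_UTVc_add_toReal_UTVc_le {g : ℝ → ℝ} {a' b' B : ℝ} (hab : a ≤ b) (hab' : a' ≤ b')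
    (h : ∀ l₁ l₂, IsPairChain a b l₁ → IsPairChain a' b' l₂ → pairSum f c l₁ + pairSum g c l₂ ≤ B) :
    (UTVc f c a b).toReal + (UTVc g c a' b').toReal ≤ B := by
  have key : ∀ l₂, IsPairChain a' b' l₂ → (UTVc f c a b).toReal + pairSum g c l₂ ≤ B := by
    intro l₂ hl₂
    have hB : 0 ≤ B - pairSum g c l₂ := by linarith [h [] l₂ hab hl₂, pairSum_nil (f := f) (c := c)]
    linarith [ENNReal.toReal_le_of_le_ofReal hB
      (UTVc_le_ofReal_s9 fun l₁ hl₁ => by linarith [h l₁ l₂ hl₁ hl₂])]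
  have hB : 0 ≤ B - (UTVc f c a b).toReal := by
    linarith [key [] hab', pairSum_nil (f := g) (c := c)]
  linarith [ENNReal.toReal_le_of_le_ofReal hB
    (UTVc_le_ofReal_s9 fun l₂ hl₂ => by linarith [key l₂ hl₂])]

end PairChain

section Uncrossing

variable {c b : ℝ}

lemma ofReal_pairSum_cons_add_le_TVc (hc : 0 ≤ c) {N : ℕ}
    (ih : ∀ (f : ℝ → ℝ) (a : ℝ) (l₁ l₂ : List (ℝ × ℝ)), l₁.length + l₂.length ≤ N →
      IsPairChain a b l₁ → IsPairChain a b l₂ →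
      ENNReal.ofReal (pairSum f c l₁ + pairSum (-f) c l₂) ≤ TVc f c a b)
    {f : ℝ → ℝ} {a u v : ℝ} {l₁ l₂ : List (ℝ × ℝ)} (hN : l₁.length + l₂.length ≤ N)
    (h₁ : IsPairChain a b ((u, v) :: l₁)) (h₂ : IsPairChain u b l₂) :
    ENNReal.ofReal (pairSum f c ((u, v) :: l₁) + pairSum (-f) c l₂) ≤ TVc f c a b := by
  obtain ⟨hau, huv, hl₁⟩ := h₁
  have hdist : ∀ x y, f y - f x - c ≤ dist (f y) (f x) - c := fun x y => by
    rw [Real.dist_eq]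
    linarith [le_abs_self (f y - f x)]
  have peel (h₂ : IsPairChain v b l₂) :
      ENNReal.ofReal (pairSum f c ((u, v) :: l₁) + pairSum (-f) c l₂) ≤ TVc f c a b := by
    rw [pairSum_cons, add_assoc]
    exact ofReal_add_le_TVc hc hau huv hl₁.le (hdist u v) (ih f v l₁ l₂ hN hl₁ h₂)
  rcases l₂ with _ | ⟨⟨p, q⟩, l₂⟩
  · exact peel hl₁.le
  obtain ⟨hup, hpq, hl₂⟩ := h₂
  rcases le_or_gt v p with hvp | hpv
  · exact peel ⟨hvp, hpq, hl₂⟩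
  -- Crossing pairs `u ≤ p < v`: trade `(u, v), (p, q)` for `(u, p)` and `(q, v)` or `(v, q)`, as
  -- `(f v - f u - c) + (f p - f q - c) = (f p - f u - c) + (f v - f q - c)`.
  simp only [List.length_cons] at hN
  have hpb : p ≤ b := hpv.le.trans hl₁.le
  rcases le_total q v with hqv | hvq
  · convert ofReal_add_le_TVc hc hau hup hpb (hdist u p)
      (ih f p ((q, v) :: l₁) l₂ (by simp only [List.length_cons]; omega) ⟨hpq, hqv, hl₁⟩
        (hl₂.anti_left hpq)) using 2
    simp only [pairSum_cons, Pi.neg_apply]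
    ring
  · convert ofReal_add_le_TVc hc hau hup hpb (hdist u p)
      (ih f p l₁ ((v, q) :: l₂) (by simp only [List.length_cons]; omega) (hl₁.anti_left hpv.le)
        ⟨hpv.le, hvq, hl₂⟩) using 2
    simp only [pairSum_cons, Pi.neg_apply]
    ring

lemma ofReal_pairSum_add_pairSum_neg_le_TVc (hc : 0 ≤ c) {f : ℝ → ℝ} {a : ℝ}
    {l₁ l₂ : List (ℝ × ℝ)} (h₁ : IsPairChain a b l₁) (h₂ : IsPairChain a b l₂) :
    ENNReal.ofReal (pairSum f c l₁ + pairSum (-f) c l₂) ≤ TVc f c a b := by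
  suffices ∀ N (f : ℝ → ℝ) (a : ℝ) (l₁ l₂ : List (ℝ × ℝ)), l₁.length + l₂.length ≤ N →
      IsPairChain a b l₁ → IsPairChain a b l₂ →
      ENNReal.ofReal (pairSum f c l₁ + pairSum (-f) c l₂) ≤ TVc f c a b from
    this _ f a l₁ l₂ le_rfl h₁ h₂
  intro N
  induction N with
  | zero =>
    rintro f a (_ | _) (_ | _) hN - - <;> simp at hN ⊢
  | succ N ih =>
    have swap {f : ℝ → ℝ} {a p q : ℝ} {l₁ l₂ : List (ℝ × ℝ)}
        (hN : l₁.length + l₂.length ≤ N) (h₂ : IsPairChain a b ((p, q) :: l₂))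
        (h₁ : IsPairChain p b l₁) :
        ENNReal.ofReal (pairSum f c l₁ + pairSum (-f) c ((p, q) :: l₂)) ≤ TVc f c a b := by
      have := ofReal_pairSum_cons_add_le_TVc hc ih (f := -f) (by omega) h₂ h₁
      rwa [neg_neg, TVc_neg, add_comm] at this
    rintro f a (_ | ⟨⟨u, v⟩, l₁⟩) (_ | ⟨⟨p, q⟩, l₂⟩) hN h₁ h₂ <;>
      simp only [List.length_cons, List.length_nil] at hN
    · simp
    · exact swap (by simpa using hN) h₂ (h₂.2.1.trans h₂.2.2.le)
    · exact ofReal_pairSum_cons_add_le_TVc hc ih (by simpa using hN) h₁ (h₁.2.1.trans h₁.2.2.le)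
    · rcases le_total u p with hup | hpu
      · exact ofReal_pairSum_cons_add_le_TVc hc ih (by simp; omega) h₁ ⟨hup, h₂.2⟩
      · exact swap (by simp; omega) h₂ ⟨hpu, h₁.2⟩

end Uncrossing

section Band

variable {f : ℝ → ℝ} {c t : ℝ}

lemma IsPairChain.exists_pairSum_ge :
    ∀ {s : ℝ} {l : List (ℝ × ℝ)}, IsPairChain s t l →
      ∃ l', IsPairChain s t l' ∧ pairSum (-f) c l + (f t - f s - c) ≤ pairSum f c l'
  | s, [], h => ⟨[(s, t)], ⟨le_rfl, h, le_rfl⟩, by simp⟩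
  | s, (p, q) :: l, ⟨hsp, hpq, hl⟩ => by
    obtain ⟨l', hl', hle⟩ := hl.exists_pairSum_ge
    exact ⟨(s, p) :: l', ⟨le_rfl, hsp, hl'.anti_left hpq⟩, by
      simp only [pairSum_cons, Pi.neg_apply] at hle ⊢; linarith⟩

lemma IsPairChain.exists_split_pairSum_ge {s : ℝ} (hst : s ≤ t) :
    ∀ {a : ℝ} {l : List (ℝ × ℝ)}, a ≤ s → IsPairChain a t l →
      ∃ l₁ l₂, IsPairChain s t l₁ ∧ IsPairChain a s l₂ ∧
        pairSum (-f) c l + (f t - f s - c) ≤ pairSum f c l₁ + pairSum (-f) c l₂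
  | _, [], has, _ => ⟨[(s, t)], [], ⟨le_rfl, hst, le_rfl⟩, has, by simp⟩
  | a, (p, q) :: l, has, ⟨hap, hpq, hl⟩ => by
    rcases le_or_gt q s with hqs | hsq
    · obtain ⟨l₁, l₂, h₁, h₂, hle⟩ := exists_split_pairSum_ge hst hqs hl
      exact ⟨l₁, (p, q) :: l₂, h₁, ⟨hap, hpq, h₂⟩, by simp only [pairSum_cons] at hle ⊢; linarith⟩
    rcases le_or_gt p s with hps | hsp
    · obtain ⟨l₁, h₁, hle⟩ := hl.exists_pairSum_ge (f := f) (c := c)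
      exact ⟨l₁, [(p, s)], h₁.anti_left hsq.le, ⟨hap, hps, le_rfl⟩, by
        simp only [pairSum_cons, pairSum_nil, Pi.neg_apply] at hle ⊢; linarith⟩
    · obtain ⟨l₁, h₁, hle⟩ := IsPairChain.exists_pairSum_ge (f := f) (c := c)
        (show IsPairChain s t ((p, q) :: l) from ⟨hsp.le, hpq, hl⟩)
      exact ⟨l₁, [], h₁, has, by simpa using hle⟩

end Band

noncomputable def f0c (f : ℝ → ℝ) (c a t : ℝ) : ℝ :=
  (UTVc f c a t).toReal - (DTVc f c a t).toReal

section F0c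

variable {f : ℝ → ℝ} {c a b : ℝ}

lemma f0c_neg (f : ℝ → ℝ) (c a t : ℝ) : f0c (-f) c a t = -f0c f c a t := by
  simp only [f0c, DTVc_eq_UTVc_neg, neg_neg]
  ring

lemma toReal_UTVc_add_toReal_DTVc_le_toReal_TVc (hc : 0 ≤ c) (hab : a ≤ b)
    (hT : TVc f c a b ≠ ⊤) :
    (UTVc f c a b).toReal + (DTVc f c a b).toReal ≤ (TVc f c a b).toReal := by
  rw [DTVc_eq_UTVc_neg]
  exact toReal_UTVc_add_toReal_UTVc_le hab hab fun l₁ l₂ h₁ h₂ =>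
    (ENNReal.ofReal_le_iff_le_toReal hT).mp (ofReal_pairSum_add_pairSum_neg_le_TVc hc h₁ h₂)

lemma sub_sub_le_f0c_sub (hc : 0 ≤ c) {x y : ℝ} (hax : a ≤ x) (hxy : x ≤ y)
    (hU : UTVc f c a y ≠ ⊤) (hD : DTVc f c a y ≠ ⊤) :
    f y - f x - c ≤ f0c f c a y - f0c f c a x := by
  have hDx : UTVc (-f) c a x ≠ ⊤ := by
    rw [← DTVc_eq_UTVc_neg]
    exact ne_top_of_le_ne_top hD (DTVc_mono_right hxy)
  have key := toReal_UTVc_add_toReal_UTVc_le (f := f) (g := -f) (c := c) hax (hax.trans hxy)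
    (B := (UTVc f c a y).toReal + (UTVc (-f) c a x).toReal - (f y - f x - c))
    fun l₁ l₂ h₁ h₂ => by
      obtain ⟨l₃, l₄, h₃, h₄, hle⟩ := h₂.exists_split_pairSum_ge (f := f) (c := c) hxy hax
      have h₁₃ := pairSum_le_toReal_UTVc hc hU (h₁.append h₃)
      have h₄' := pairSum_le_toReal_UTVc hc hDx h₄
      rw [pairSum_append] at h₁₃
      linarith
  simp only [f0c, DTVc_eq_UTVc_neg]
  linarith

lemma abs_sub_sub_le_abs_f0c_sub (hc : 0 ≤ c) {x y : ℝ} (hax : a ≤ x) (hxy : x ≤ y)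
    (hU : UTVc f c a y ≠ ⊤) (hD : DTVc f c a y ≠ ⊤) :
    |f y - f x| - c ≤ |f0c f c a y - f0c f c a x| := by
  have hup := sub_sub_le_f0c_sub hc hax hxy hU hD
  have hdown := sub_sub_le_f0c_sub (f := -f) hc hax hxy (by rwa [← DTVc_eq_UTVc_neg])
    (by rwa [DTVc_eq_UTVc_neg, neg_neg])
  simp only [f0c_neg, Pi.neg_apply] at hdown
  rcases abs_cases (f y - f x) with ⟨h, -⟩ | ⟨h, -⟩ <;>
    linarith [le_abs_self (f0c f c a y - f0c f c a x), neg_abs_le (f0c f c a y - f0c f c a x)]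

lemma TVc_le_TVar_f0c (hc : 0 ≤ c) (hU : UTVc f c a b ≠ ⊤) (hD : DTVc f c a b ≠ ⊤) :
    TVc f c a b ≤ TVar (f0c f c a) a b :=
  partitionSup_mono (g := fun x y => dist (f y) (f x) - c)
    (g' := fun x y => dist (f0c f c a y) (f0c f c a x)) fun x y hax hxy hyb => by
      simpa only [Real.dist_eq] using abs_sub_sub_le_abs_f0c_sub hc hax hxy.le
        (ne_top_of_le_ne_top hU (UTVc_mono_right hyb))
        (ne_top_of_le_ne_top hD (DTVc_mono_right hyb))

lemma TVar_f0c_le (hU : UTVc f c a b ≠ ⊤) (hD : DTVc f c a b ≠ ⊤) (hab : a ≤ b) :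
    TVar (f0c f c a) a b
      ≤ ENNReal.ofReal ((UTVc f c a b).toReal + (DTVc f c a b).toReal) := by
  have hUmono {x y : ℝ} (hxy : x ≤ y) (hyb : y ≤ b) :
      (UTVc f c a x).toReal ≤ (UTVc f c a y).toReal :=
    ENNReal.toReal_mono (ne_top_of_le_ne_top hU (UTVc_mono_right hyb)) (UTVc_mono_right hxy)
  have hDmono {x y : ℝ} (hxy : x ≤ y) (hyb : y ≤ b) :
      (DTVc f c a x).toReal ≤ (DTVc f c a y).toReal :=
    ENNReal.toReal_mono (ne_top_of_le_ne_top hD (DTVc_mono_right hyb)) (DTVc_mono_right hxy)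
  refine (partitionSup_le_ofReal_sub (g := fun x y => dist (f0c f c a y) (f0c f c a x))
    (φ := fun t => (UTVc f c a t).toReal + (DTVc f c a t).toReal)
    (fun x _ y hy hxy => add_le_add (hUmono hxy hy.2) (hDmono hxy hy.2))
    (fun x y _ hxy hyb => ?_) hab).trans (ENNReal.ofReal_le_ofReal ?_)
  · rw [Real.dist_eq, abs_le, f0c, f0c]
    constructor <;> linarith [hUmono hxy.le hyb, hDmono hxy.le hyb]
  · linarith [(UTVc f c a a).toReal_nonneg, (DTVc f c a a).toReal_nonneg]

end F0c

theorem tv_of_f0c_general (a b : ℝ) (f : ℝ → ℝ)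
    (hf : Cadlag f a b) (c : ℝ) (hc : 0 < c) :
    ∀ s ∈ Set.Ioc a b,
      TVar (fun t => (UTVc f c a t).toReal - (DTVc f c a t).toReal) a s
        = TVc f c a s := by
  rintro s ⟨has, hsb⟩
  have hT : TVc f c a s ≠ ⊤ := (hf.mono_right hsb).TVc_ne_top has.le hc
  have hU : UTVc f c a s ≠ ⊤ := ne_top_of_le_ne_top hT UTVc_le_TVc
  have hD : DTVc f c a s ≠ ⊤ := ne_top_of_le_ne_top hT DTVc_le_TVc
  refine le_antisymm ?_ (TVc_le_TVar_f0c hc.le hU hD)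
  calc TVar (f0c f c a) a s
      ≤ ENNReal.ofReal ((UTVc f c a s).toReal + (DTVc f c a s).toReal) := TVar_f0c_le hU hD has.le
    _ ≤ ENNReal.ofReal (TVc f c a s).toReal :=
      ENNReal.ofReal_le_ofReal (toReal_UTVc_add_toReal_DTVc_le_toReal_TVc hc.le has.le hT)
    _ = TVc f c a s := ENNReal.ofReal_toReal hT

/-- The total variation of `f^{0,c}(s) = UTV^c(f,[a,s]) − DTV^c(f,[a,s])`
on `[a, s]` equals `TV^c(f,[a,s])`, i.e. `UTV^c − DTV^c` is a minimal (Jordan)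
decomposition. -/
theorem tv_of_f0c (a b : ℝ) (hab : a < b) (f : ℝ → ℝ)
    (hf : Cadlag f a b) (c : ℝ) (hc : 0 < c) :
    ∀ s ∈ Set.Ioc a b,
      TVar (fun t => (UTVc f c a t).toReal - (DTVc f c a t).toReal) a s
        = TVc f c a s :=
  tv_of_f0c_general a b f hf c hc
end
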